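/- Let $\alpha \in (0,1)$, $\theta \in \left[\frac{\alpha}{2} - \frac{1-\alpha}{1+\alpha}, \frac{\alpha}{2}\right]$, and let $\omega_k$ be the coefficients of $\omega(\xi) = (1-\xi)^{\alpha}\left[1 + \left(\frac{\alpha}{2}-\theta\right)(1-\xi)\right]$. Then for every $n \geq 0$, the partial sum satisfies $\sum_{k=0}^{n} \omega_k > 0$. -/

import Mathlib

/-!
The partial sums of the coefficients of `(1-ξ)^α` are the coefficients of `(1-ξ)^(α-1)`,
`K_n = ∏_{j<n} (j+1-α)/(j+1)`, which are positive for `α < 1`. With `c = α/2 - θ ≥ 0`,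
`∑_{k≤n} ω_k = (1+c) K_n - c K_{n-1} = K_{n-1} (n - α(1+c)) / n` for `n ≥ 1`, and the lower bound
on `θ` gives `α(1+c) ≤ 2α/(1+α) < 1 ≤ n`.
-/

noncomputable def genBinom (α : ℝ) (k : ℕ) : ℝ :=
  (∏ j ∈ Finset.range k, (α - j)) / (Nat.factorial k)

noncomputable def kappa (α : ℝ) (k : ℕ) : ℝ := (-1 : ℝ) ^ k * genBinom α k

/-- Coefficients of `ω(ξ) = (1-ξ)^α [1 + (α/2 - θ)(1-ξ)]`. -/
noncomputable def omegaCoeff (α θ : ℝ) : ℕ → ℝ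
  | 0 => 1 + α / 2 - θ
  | (k + 1) => (1 + α / 2 - θ) * kappa α (k + 1) + (θ - α / 2) * kappa α k

open Finset

@[simp]
lemma kappa_zero (a : ℝ) : kappa a 0 = 1 := by
  simp [kappa, genBinom]

lemma kappa_succ (a : ℝ) (n : ℕ) : kappa a (n + 1) = kappa a n * ((n - a) / (n + 1)) := by
  simp only [kappa, genBinom, prod_range_succ, Nat.factorial_succ, pow_succ]
  push_cast
  field_simp
  ring

lemma kappa_succ_eq_neg_mul_kappa_sub_one (a : ℝ) (n : ℕ) :
    kappa a (n + 1) = -(a / (n + 1)) * kappa (a - 1) n := by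
  simp only [kappa, genBinom, prod_range_succ', Nat.factorial_succ, pow_succ]
  push_cast
  field_simp
  ring_nf

lemma kappa_pos {a : ℝ} (ha : a < 0) (n : ℕ) : 0 < kappa a n := by
  induction n with
  | zero => simp
  | succ n ih =>
    rw [kappa_succ]
    have : a < n := ha.trans_le n.cast_nonneg
    exact mul_pos ih (div_pos (by linarith) (by positivity))

lemma sum_range_succ_kappa (a : ℝ) (n : ℕ) :
    ∑ k ∈ range (n + 1), kappa a k = kappa (a - 1) n := by
  induction n with
  | zero => simp
  | succ n ih =>
    rw [sum_range_succ, ih, kappa_succ_eq_neg_mul_kappa_sub_one, kappa_succ (a - 1)]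
    field_simp
    ring

lemma sum_range_succ_omegaCoeff (α θ : ℝ) (n : ℕ) :
    ∑ k ∈ range (n + 1), omegaCoeff α θ k
      = (1 + α / 2 - θ) * ∑ k ∈ range (n + 1), kappa α k
        + (θ - α / 2) * ∑ k ∈ range n, kappa α k := by
  induction n with
  | zero => simp [omegaCoeff]
  | succ n ih =>
    rw [sum_range_succ, ih, sum_range_succ (kappa α) (n + 1), sum_range_succ (kappa α) n]
    simp only [omegaCoeff]
    ring

lemma sum_range_omegaCoeff_add_two (α θ : ℝ) (n : ℕ) :
    ∑ k ∈ range (n + 2), omegaCoeff α θ k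
      = kappa (α - 1) n * ((n + 1 - α * (1 + α / 2 - θ)) / (n + 1)) := by
  rw [sum_range_succ_omegaCoeff, sum_range_succ_kappa, sum_range_succ_kappa,
    kappa_succ (α - 1)]
  field_simp
  ring

/-- For `α ∈ (0,1)` and `θ ∈ [α/2 - (1-α)/(1+α), α/2]`, every partial sum
`∑_{k=0}^{n} ω_k` is positive. -/
theorem stmt7 (α θ : ℝ) (hα : α ∈ Set.Ioo (0 : ℝ) 1)
    (hθ : θ ∈ Set.Icc (α / 2 - (1 - α) / (1 + α)) (α / 2)) :
    ∀ n : ℕ, 0 < ∑ k ∈ Finset.range (n + 1), omegaCoeff α θ k := by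
  obtain ⟨hα0, hα1⟩ := hα
  obtain ⟨hθlo, hθhi⟩ := hθ
  rintro (_ | n)
  · simp only [zero_add, range_one, sum_singleton, omegaCoeff]
    linarith
  have hc : α / 2 - θ ≤ (1 - α) / (1 + α) := by linarith
  rw [le_div_iff₀ (by linarith)] at hc
  have hlt : α * (1 + α / 2 - θ) < 1 := by nlinarith
  rw [sum_range_omegaCoeff_add_two]
  exact mul_pos (kappa_pos (by linarith) n)
    (div_pos (by linarith [n.cast_nonneg (α := ℝ)]) (by positivity))
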